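/- arXiv:0912.5478 — 3 statements merged into one kernel-verified Lean document; each statement's English description precedes it below -/
import Mathlib

section
/- Let B₀ ⊆ B₁ be building sets on [n+1] and S ∈ B₁. Then there exists a unique partition S = S₁ ⊔ ... ⊔ S_k with each S_j ∈ B₀ and k minimal among all such disjoint representations (the decomposition of S by elements of B₀). -/
/-- A building set on a subset `X` of `[n+1]` (modeled as `Fin (n+1)`). -/
def IsBuildingSetOn {n : ℕ} (X : Finset (Fin (n + 1))) (B : Set (Finset (Fin (n + 1)))) : Prop :=
  (∀ S ∈ B, S.Nonempty ∧ S ⊆ X) ∧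
  (∀ i ∈ X, ({i} : Finset (Fin (n + 1))) ∈ B) ∧
  (∀ S₁ ∈ B, ∀ S₂ ∈ B, (S₁ ∩ S₂).Nonempty → S₁ ∪ S₂ ∈ B)

/-- `D` is a partition of `S` into pairwise disjoint nonempty members of `B₀`. -/
def IsBSPartition {n : ℕ} (B₀ : Set (Finset (Fin (n + 1)))) (S : Finset (Fin (n + 1)))
    (D : Finset (Finset (Fin (n + 1)))) : Prop :=
  (∀ T ∈ D, T ∈ B₀) ∧ (∀ T ∈ D, T.Nonempty) ∧
  (D : Set (Finset (Fin (n + 1)))).Pairwise (fun T T' => Disjoint T T') ∧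
  D.sup id = S

/-- `D` is the decomposition of `S` by elements of `B₀`: a partition of `S` into members of
`B₀` with the minimal number of parts. -/
def IsDecomposition {n : ℕ} (B₀ : Set (Finset (Fin (n + 1)))) (S : Finset (Fin (n + 1)))
    (D : Finset (Finset (Fin (n + 1)))) : Prop :=
  IsBSPartition B₀ S D ∧ ∀ D', IsBSPartition B₀ S D' → D.card ≤ D'.card

/-!
The decomposition consists of the maximal members of `B₀` contained in `S`. Two such members
that meet have their union in `B₀`, so by maximality they coincide; since every singleton lies
in `B₀`, the maximal members therefore partition `S`. Every other partition of `S` into members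
of `B₀` refines this one, and a refinement of a partition with no more parts than it is the
partition itself.
-/

open Finset

namespace Finpartition

variable {α : Type*} [DecidableEq α] {s : Finset α}

theorem eq_of_le_of_card_le {P Q : Finpartition s} (hPQ : P ≤ Q) (hcard : #P.parts ≤ #Q.parts) :
    P = Q := by
  -- `g` sends a part of `P` to the part of `Q` containing it; it is onto, hence injective, so
  -- every part of `Q` contains a single part of `P`, which then fills it.
  choose g hgQ hle using hPQ
  have hg_eq {b c : Finset α} (hb : b ∈ P.parts) (hc : c ∈ Q.parts) (hbc : ¬Disjoint b c) :
      g hb = c :=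
    Q.disjoint.elim (hgQ hb) hc fun h ↦ hbc (h.mono_left (hle hb))
  have hg_surj : ∀ c ∈ Q.parts, ∃ b hb, g (b := b) hb = c := by
    intro c hc
    obtain ⟨b, hb, hbc⟩ := exists_le_of_le (fun _ hb ↦ ⟨g hb, hgQ hb, hle hb⟩) hc
    refine ⟨b, hb, hg_eq hb hc fun h ↦ P.ne_bot hb ?_⟩
    exact disjoint_self.1 (h.mono_right hbc)
  have hg_inj := inj_on_of_surj_on_of_card_le (fun b hb ↦ g hb) (fun _ hb ↦ hgQ hb) hg_surj hcard
  refine le_antisymm (fun _ hb ↦ ⟨g hb, hgQ hb, hle hb⟩) fun c hc ↦ ?_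
  obtain ⟨b, hb, rfl⟩ := hg_surj c hc
  refine ⟨b, hb, fun x hx ↦ ?_⟩
  obtain ⟨b', hb', hxb'⟩ := P.exists_mem (Q.le hc hx)
  have hgb' : g hb' = g hb :=
    hg_eq hb' (hgQ hb) (not_disjoint_iff.2 ⟨x, hxb', hx⟩)
  rwa [← hg_inj hb' hb hgb']

end Finpartition

section MaximalPartition

variable {α : Type*} {B : Set (Finset α)} {S : Finset α}

theorem exists_maximal_superset {T : Finset α} (hT : T ∈ B) (hTS : T ⊆ S) :
    ∃ M, Maximal (fun U ↦ U ∈ B ∧ U ⊆ S) M ∧ T ⊆ M := by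
  have hfin : {U | U ∈ B ∧ U ⊆ S}.Finite :=
    (S.powerset : Set (Finset α)).toFinite.subset fun U hU ↦ mem_powerset.2 hU.2
  obtain ⟨M, hTM, hM⟩ := hfin.exists_le_maximal (a := T) ⟨hT, hTS⟩
  exact ⟨M, hM, hTM⟩

variable [DecidableEq α]

theorem pairwiseDisjoint_maximal
    (hunion : ∀ T₁ ∈ B, ∀ T₂ ∈ B, (T₁ ∩ T₂).Nonempty → T₁ ∪ T₂ ∈ B) :
    {M | Maximal (fun U ↦ U ∈ B ∧ U ⊆ S) M}.PairwiseDisjoint id := by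
  intro M hM M' hM' hne
  rw [Set.mem_ofPred_eq] at hM hM'
  refine disjoint_iff_inter_eq_empty.2 (not_nonempty_iff_eq_empty.1 fun hmeet ↦ hne ?_)
  have hU : M ∪ M' ∈ B ∧ M ∪ M' ⊆ S :=
    ⟨hunion M hM.prop.1 M' hM'.prop.1 hmeet, union_subset hM.prop.2 hM'.prop.2⟩
  exact (hM.eq_of_le hU subset_union_left).trans (hM'.eq_of_le hU subset_union_right).symm

open Classical in
/-- `ofErase` discards `∅`, which is a maximal member when `S = ∅` and `∅ ∈ B`. -/
noncomputable def maximalPartition (hsing : ∀ i ∈ S, {i} ∈ B)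
    (hunion : ∀ T₁ ∈ B, ∀ T₂ ∈ B, (T₁ ∩ T₂).Nonempty → T₁ ∪ T₂ ∈ B) : Finpartition S :=
  Finpartition.ofErase {M ∈ S.powerset | Maximal (fun U ↦ U ∈ B ∧ U ⊆ S) M}
    (Set.PairwiseDisjoint.supIndep <| (pairwiseDisjoint_maximal hunion).subset
      fun _ hM ↦ (mem_filter.1 hM).2)
    (by
      refine le_antisymm (Finset.sup_le fun M hM ↦ mem_powerset.1 (mem_filter.1 hM).1) ?_
      intro i hi
      obtain ⟨M, hM, hiM⟩ := exists_maximal_superset (hsing i hi) (singleton_subset_iff.2 hi)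
      exact mem_sup.2 ⟨M, mem_filter.2 ⟨mem_powerset.2 hM.prop.2, hM⟩,
        hiM (mem_singleton_self i)⟩)

variable (hsing : ∀ i ∈ S, {i} ∈ B)
  (hunion : ∀ T₁ ∈ B, ∀ T₂ ∈ B, (T₁ ∩ T₂).Nonempty → T₁ ∪ T₂ ∈ B)

theorem mem_maximalPartition_parts {M : Finset α} :
    M ∈ (maximalPartition hsing hunion).parts ↔
      M ≠ ∅ ∧ Maximal (fun U ↦ U ∈ B ∧ U ⊆ S) M := by
  simp only [maximalPartition, Finpartition.ofErase_parts, bot_eq_empty, mem_erase, mem_filter,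
    mem_powerset]
  exact and_congr_right fun _ ↦ and_iff_right_of_imp fun hM ↦ hM.prop.2

theorem mem_of_mem_maximalPartition_parts {M : Finset α}
    (hM : M ∈ (maximalPartition hsing hunion).parts) : M ∈ B :=
  ((mem_maximalPartition_parts hsing hunion).1 hM).2.prop.1

theorem le_maximalPartition (P : Finpartition S) (hP : ∀ T ∈ P.parts, T ∈ B) :
    P ≤ maximalPartition hsing hunion := by
  intro T hT
  obtain ⟨M, hM, hTM⟩ := exists_maximal_superset (hP T hT) (P.le hT)
  obtain ⟨x, hx⟩ := nonempty_of_ne_empty (P.ne_bot hT)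
  exact ⟨M, (mem_maximalPartition_parts hsing hunion).2 ⟨ne_empty_of_mem (hTM hx), hM⟩, hTM⟩

end MaximalPartition

section BSPartition

variable {n : ℕ} {B₀ : Set (Finset (Fin (n + 1)))} {S : Finset (Fin (n + 1))}

def IsBSPartition.toFinpartition {D : Finset (Finset (Fin (n + 1)))}
    (hD : IsBSPartition B₀ S D) : Finpartition S where
  parts := D
  supIndep := supIndep_iff_pairwiseDisjoint.2 hD.2.2.1
  sup_parts := hD.2.2.2
  bot_notMem h := not_nonempty_empty (hD.2.1 ∅ h)

theorem isBSPartition_parts (P : Finpartition S) (hP : ∀ T ∈ P.parts, T ∈ B₀) :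
    IsBSPartition B₀ S P.parts :=
  ⟨hP, fun _ hT ↦ nonempty_iff_ne_empty.2 (P.ne_bot hT), P.disjoint, P.sup_parts⟩

end BSPartition

theorem stmt4_general {n : ℕ} (B₀ : Set (Finset (Fin (n + 1))))
    (hB₀ : IsBuildingSetOn Finset.univ B₀) (S : Finset (Fin (n + 1))) :
    ∃! D : Finset (Finset (Fin (n + 1))), IsDecomposition B₀ S D := by
  obtain ⟨-, hsing, hunion⟩ := hB₀
  let P := maximalPartition (S := S) (fun i _ ↦ hsing i (mem_univ i)) hunion
  have hP : ∀ T ∈ P.parts, T ∈ B₀ := fun _ ↦ mem_of_mem_maximalPartition_parts _ hunion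
  have hle {D} (hD : IsBSPartition B₀ S D) : hD.toFinpartition ≤ P :=
    le_maximalPartition _ hunion _ hD.1
  refine ⟨P.parts, ⟨isBSPartition_parts P hP, fun D hD ↦ Finpartition.card_mono (hle hD)⟩, ?_⟩
  rintro D ⟨hD, hmin⟩
  exact congrArg Finpartition.parts
    (Finpartition.eq_of_le_of_card_le (hle hD) (hmin _ (isBSPartition_parts P hP)))

/-- Given building sets `B₀ ⊆ B₁` on `[n+1]` and `S ∈ B₁`, there is a unique partition of `S`
into pairwise disjoint members of `B₀` with minimal number of parts. -/
theorem stmt4 {n : ℕ} (B₀ B₁ : Set (Finset (Fin (n + 1))))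
    (hB₀ : IsBuildingSetOn Finset.univ B₀) (hB₁ : IsBuildingSetOn Finset.univ B₁)
    (hsub : B₀ ⊆ B₁) (S : Finset (Fin (n + 1))) (hS : S ∈ B₁) :
    ∃! D : Finset (Finset (Fin (n + 1))), IsDecomposition B₀ S D :=
  stmt4_general B₀ hB₀ S
end

section
/- Let B₀ ⊆ B₁ ⊆ B₂ be building sets on [n+1] and S ∈ B₂. Then the decomposition of S by elements of B₀ equals the union over all parts T of the decomposition of S by elements of B₁ of the decomposition of T by elements of B₀ (i.e., B₀(S) = B₀(B₁(S))). -/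
def Absorbing {n : ℕ} (B : Set (Finset (Fin (n + 1)))) (S : Finset (Fin (n + 1)))
    (D : Finset (Finset (Fin (n + 1)))) : Prop :=
  ∀ T ∈ D, ∀ b ∈ B, b ⊆ S → (b ∩ T).Nonempty → b ⊆ T

section

variable {n : ℕ} {B : Set (Finset (Fin (n + 1)))} {S : Finset (Fin (n + 1))}
  {D : Finset (Finset (Fin (n + 1)))}

lemma union_sup_mem_of_inter_nonempty
    (hB : ∀ S₁ ∈ B, ∀ S₂ ∈ B, (S₁ ∩ S₂).Nonempty → S₁ ∪ S₂ ∈ B)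
    {U : Finset (Fin (n + 1))} (hU : U ∈ B) (E : Finset (Finset (Fin (n + 1))))
    (hE : ∀ T ∈ E, T ∈ B ∧ (T ∩ U).Nonempty) :
    U ∪ E.sup id ∈ B := by
  induction E using Finset.induction_on with
  | empty => simpa using hU
  | @insert a E _ ih =>
    have hUE : U ∪ E.sup id ∈ B := ih fun T hT => hE T (Finset.mem_insert_of_mem hT)
    obtain ⟨ha, x, hx⟩ := hE a (Finset.mem_insert_self a E)
    have hmeet : ((U ∪ E.sup id) ∩ a).Nonempty :=
      ⟨x, Finset.mem_inter.mpr ⟨Finset.mem_union_left _ (Finset.mem_inter.mp hx).2,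
        (Finset.mem_inter.mp hx).1⟩⟩
    convert hB _ hUE _ ha hmeet using 1
    simp only [Finset.sup_insert, id, Finset.sup_eq_union]
    ac_rfl

namespace IsBSPartition

lemma subset_of_mem (hD : IsBSPartition B S D) {T : Finset (Fin (n + 1))} (hT : T ∈ D) :
    T ⊆ S :=
  hD.2.2.2 ▸ Finset.le_sup (f := id) hT

lemma exists_mem_of_mem (hD : IsBSPartition B S D) {x : Fin (n + 1)} (hx : x ∈ S) :
    ∃ T ∈ D, x ∈ T :=
  Finset.mem_sup.mp (hD.2.2.2 ▸ hx : x ∈ D.sup id)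

lemma merge (hD : IsBSPartition B S D) {E : Finset (Finset (Fin (n + 1)))} (hED : E ⊆ D)
    (hEne : E.Nonempty) (hE : E.sup id ∈ B) :
    IsBSPartition B S (insert (E.sup id) (D \ E)) := by
  obtain ⟨hmem, hne, hdisj, hsup⟩ := hD
  have hdisj_sup : ∀ c ∈ D \ E, Disjoint c (E.sup id) := by
    intro c hc
    obtain ⟨hcD, hcE⟩ := Finset.mem_sdiff.mp hc
    exact Finset.disjoint_sup_right.mpr fun T hT =>
      hdisj hcD (hED hT) fun h => hcE (h ▸ hT)
  refine ⟨?_, ?_, ?_, ?_⟩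
  · simp only [Finset.forall_mem_insert]
    exact ⟨hE, fun T hT => hmem T (Finset.mem_sdiff.mp hT).1⟩
  · simp only [Finset.forall_mem_insert]
    obtain ⟨T, hT⟩ := hEne
    exact ⟨(hne T (hED hT)).mono (Finset.le_sup (f := id) hT),
      fun T hT => hne T (Finset.mem_sdiff.mp hT).1⟩
  · rw [Finset.coe_insert]
    refine Set.Pairwise.insert (fun c hc c' hc' => hdisj (Finset.mem_sdiff.mp hc).1
      (Finset.mem_sdiff.mp hc').1) fun c hc _ => ?_
    exact ⟨(hdisj_sup c hc).symm, hdisj_sup c hc⟩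
  · rw [Finset.sup_insert, id_eq, ← Finset.sup_union, Finset.union_sdiff_of_subset hED, hsup]

end IsBSPartition

lemma IsDecomposition.absorbing
    (hB : ∀ S₁ ∈ B, ∀ S₂ ∈ B, (S₁ ∩ S₂).Nonempty → S₁ ∪ S₂ ∈ B)
    (hD : IsDecomposition B S D) : Absorbing B S D := by
  obtain ⟨hpart, hmin⟩ := hD
  intro T hT b hb hbS hbT
  by_contra hbT'
  obtain ⟨x, hxb, hxT⟩ := Finset.not_subset.mp hbT'
  set E := D.filter fun T' => (T' ∩ b).Nonempty
  have hED : E ⊆ D := Finset.filter_subset _ _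
  have hbE : b ⊆ E.sup id := by
    intro y hy
    obtain ⟨T', hT', hyT'⟩ := hpart.exists_mem_of_mem (hbS hy)
    exact Finset.mem_sup.mpr
      ⟨T', Finset.mem_filter.mpr ⟨hT', y, Finset.mem_inter.mpr ⟨hyT', hy⟩⟩, hyT'⟩
  have hEB : E.sup id ∈ B := by
    have := union_sup_mem_of_inter_nonempty hB hb E fun T' hT' =>
      ⟨hpart.1 T' (hED hT'), (Finset.mem_filter.mp hT').2⟩
    rwa [Finset.union_eq_right.mpr hbE] at this
  have hTE : T ∈ E := Finset.mem_filter.mpr ⟨hT, Finset.inter_comm b T ▸ hbT⟩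
  obtain ⟨T', hT'E, hxT'⟩ := Finset.mem_sup.mp (hbE hxb)
  have hE2 : 2 ≤ E.card :=
    Finset.one_lt_card.mpr ⟨T', hT'E, T, hTE, fun h => hxT (h ▸ hxT')⟩
  have hfewer := hmin _ (hpart.merge hED ⟨T, hTE⟩ hEB)
  have hmerged := Finset.card_insert_le (E.sup id) (D \ E)
  rw [Finset.card_sdiff_of_subset hED] at hmerged
  have hED_card := Finset.card_le_card hED
  omega

lemma IsBSPartition.subset_of_absorbing {D' : Finset (Finset (Fin (n + 1)))}
    (hD : IsBSPartition B S D) (hD' : IsBSPartition B S D') (habs' : Absorbing B S D')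
    (habs : Absorbing B S D) : D ⊆ D' := by
  intro T hT
  obtain ⟨x, hxT⟩ := hD.2.1 T hT
  obtain ⟨T', hT', hxT'⟩ := hD'.exists_mem_of_mem (hD.subset_of_mem hT hxT)
  have hTT' : T ⊆ T' := habs' T' hT' T (hD.1 T hT) (hD.subset_of_mem hT)
    ⟨x, Finset.mem_inter.mpr ⟨hxT, hxT'⟩⟩
  have hT'T : T' ⊆ T := habs T hT T' (hD'.1 T' hT') (hD'.subset_of_mem hT')
    ⟨x, Finset.mem_inter.mpr ⟨hxT', hxT⟩⟩
  rwa [Finset.Subset.antisymm hTT' hT'T]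

lemma IsBSPartition.eq_of_absorbing {D' : Finset (Finset (Fin (n + 1)))}
    (hD : IsBSPartition B S D) (hD' : IsBSPartition B S D') (habs : Absorbing B S D)
    (habs' : Absorbing B S D') : D = D' :=
  (hD.subset_of_absorbing hD' habs' habs).antisymm (hD'.subset_of_absorbing hD habs habs')

variable {B₀ B₁ : Set (Finset (Fin (n + 1)))}
  {f : Finset (Fin (n + 1)) → Finset (Finset (Fin (n + 1)))}

lemma IsBSPartition.biUnion (hD : IsBSPartition B₁ S D)
    (hf : ∀ T ∈ D, IsBSPartition B₀ T (f T)) : IsBSPartition B₀ S (D.biUnion f) := by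
  obtain ⟨-, -, hdisj, hsup⟩ := hD
  refine ⟨?_, ?_, ?_, ?_⟩
  · intro m hm
    obtain ⟨T, hT, hmT⟩ := Finset.mem_biUnion.mp hm
    exact (hf T hT).1 m hmT
  · intro m hm
    obtain ⟨T, hT, hmT⟩ := Finset.mem_biUnion.mp hm
    exact (hf T hT).2.1 m hmT
  · intro m hm m' hm' hmm'
    obtain ⟨T, hT, hmT⟩ := Finset.mem_biUnion.mp hm
    obtain ⟨T', hT', hmT'⟩ := Finset.mem_biUnion.mp hm'
    by_cases hTT' : T = T'
    · subst hTT'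
      exact (hf T hT).2.2.1 hmT hmT' hmm'
    · exact (hdisj hT hT' hTT').mono ((hf T hT).subset_of_mem hmT)
        ((hf T' hT').subset_of_mem hmT')
  · rw [Finset.sup_biUnion, ← hsup]
    exact Finset.sup_congr rfl fun T hT => (hf T hT).2.2.2

lemma Absorbing.biUnion (h01 : B₀ ⊆ B₁) (habs : Absorbing B₁ S D)
    (hf : ∀ T ∈ D, IsBSPartition B₀ T (f T)) (habsf : ∀ T ∈ D, Absorbing B₀ T (f T)) :
    Absorbing B₀ S (D.biUnion f) := by
  intro m hm b hb hbS hbm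
  obtain ⟨T, hT, hmT⟩ := Finset.mem_biUnion.mp hm
  have hbT : b ⊆ T := habs T hT b (h01 hb) hbS
    (hbm.mono (Finset.inter_subset_inter_left ((hf T hT).subset_of_mem hmT)))
  exact habsf T hT m hmT b hb hbT hbm

end

theorem stmt6_general {n : ℕ} (B₀ B₁ : Set (Finset (Fin (n + 1))))
    (hB₀ : IsBuildingSetOn Finset.univ B₀) (hB₁ : IsBuildingSetOn Finset.univ B₁)
    (h01 : B₀ ⊆ B₁)
    (S : Finset (Fin (n + 1)))
    (D₁ : Finset (Finset (Fin (n + 1)))) (hD₁ : IsDecomposition B₁ S D₁)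
    (f : Finset (Fin (n + 1)) → Finset (Finset (Fin (n + 1))))
    (hf : ∀ T ∈ D₁, IsDecomposition B₀ T (f T))
    (D₀ : Finset (Finset (Fin (n + 1)))) (hD₀ : IsDecomposition B₀ S D₀) :
    D₀ = D₁.biUnion f := by
  have hpart : IsBSPartition B₀ S (D₁.biUnion f) := hD₁.1.biUnion fun T hT => (hf T hT).1
  have habs : Absorbing B₀ S (D₁.biUnion f) :=
    (hD₁.absorbing hB₁.2.2).biUnion h01 (fun T hT => (hf T hT).1)
      fun T hT => (hf T hT).absorbing hB₀.2.2
  exact hD₀.1.eq_of_absorbing hpart (hD₀.absorbing hB₀.2.2) habs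

/-- For building sets `B₀ ⊆ B₁ ⊆ B₂` and `S ∈ B₂`, the decomposition of `S` by elements of
`B₀` is obtained by decomposing each part of the decomposition of `S` by elements of `B₁`
by elements of `B₀`: `B₀(S) = B₀(B₁(S))`. -/
theorem stmt6 {n : ℕ} (B₀ B₁ B₂ : Set (Finset (Fin (n + 1))))
    (hB₀ : IsBuildingSetOn Finset.univ B₀) (hB₁ : IsBuildingSetOn Finset.univ B₁)
    (hB₂ : IsBuildingSetOn Finset.univ B₂)
    (h01 : B₀ ⊆ B₁) (h12 : B₁ ⊆ B₂)
    (S : Finset (Fin (n + 1))) (hS : S ∈ B₂)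
    (D₁ : Finset (Finset (Fin (n + 1)))) (hD₁ : IsDecomposition B₁ S D₁)
    (f : Finset (Fin (n + 1)) → Finset (Finset (Fin (n + 1))))
    (hf : ∀ T ∈ D₁, IsDecomposition B₀ T (f T))
    (D₀ : Finset (Finset (Fin (n + 1)))) (hD₀ : IsDecomposition B₀ S D₀) :
    D₀ = D₁.biUnion f :=
  stmt6_general B₀ B₁ hB₀ hB₁ h01 S D₁ hD₁ f hf D₀ hD₀
end

section
/- Let B be a connected building set on [n+1] such that the nestohedron P_B is flag (equivalently, using the criterion: every S ∈ B with |S| ≥ 2 can be written as S = S₁ ⊔ S₂ with S₁, S₂ ∈ B). Then there exists a connected building set B₀ ⊆ B such that P_{B₀} is combinatorially equivalent to the cube Iⁿ; concretely, there exists B₀ ⊆ B which is connected, contains all singletons, and such that every element of B₀ of size ≥ 2 splits as a disjoint union of exactly two elements of B₀, and |B₀| = 2n + 1. -/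
/-- A building set on `[n+1]` (as a finite collection): nonempty subsets, all singletons,
closed under unions of intersecting members. -/
def IsBuildingSet {n : ℕ} (B : Finset (Finset (Fin (n + 1)))) : Prop :=
  (∀ S ∈ B, S.Nonempty) ∧
  (∀ i : Fin (n + 1), ({i} : Finset (Fin (n + 1))) ∈ B) ∧
  (∀ S₁ ∈ B, ∀ S₂ ∈ B, (S₁ ∩ S₂).Nonempty → S₁ ∪ S₂ ∈ B)

/-- `B` is connected: `[n+1] ∈ B`. -/
def IsConnectedBS {n : ℕ} (B : Finset (Finset (Fin (n + 1)))) : Prop :=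
  (Finset.univ : Finset (Fin (n + 1))) ∈ B

/-- `B` is flag: every member of size ≥ 2 is the disjoint union of two members
(the criterion for the nestohedron `P_B` to be a flag polytope). -/
def IsFlagBS {n : ℕ} (B : Finset (Finset (Fin (n + 1)))) : Prop :=
  ∀ S ∈ B, 2 ≤ S.card →
    ∃ S₁ ∈ B, ∃ S₂ ∈ B, Disjoint S₁ S₂ ∧ S₁ ∪ S₂ = S

/-!
Split the ground set by the flag property, split each part again, and so on down to singletons.
The sets met along the way form a full binary tree with `n + 1` leaves, hence `2n + 1` nodes;
being nested or disjoint, they are automatically closed under unions of intersecting members.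
-/

open Finset

theorem Finset.not_subset_of_disjoint {α : Type*} {s t : Finset α} (hst : Disjoint s t)
    (ht : t.Nonempty) : ¬t ⊆ s :=
  fun h => ht.ne_empty (disjoint_self.1 (hst.mono_left h))

variable {α : Type*} [DecidableEq α]

structure IsSplitTree (T : Finset (Finset α)) (S : Finset α) : Prop where
  root_mem : S ∈ T
  subset_root : ∀ X ∈ T, X ⊆ S
  nonempty : ∀ X ∈ T, X.Nonempty
  laminar : ∀ X ∈ T, ∀ Y ∈ T, (X ∩ Y).Nonempty → X ⊆ Y ∨ Y ⊆ X
  singleton_mem : ∀ i ∈ S, {i} ∈ T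
  split : ∀ X ∈ T, 2 ≤ X.card → ∃ X₁ ∈ T, ∃ X₂ ∈ T, Disjoint X₁ X₂ ∧ X₁ ∪ X₂ = X
  card_add_one : T.card + 1 = 2 * S.card

theorem Finset.ssubset_union_left_of_disjoint {s t : Finset α} (hst : Disjoint s t)
    (ht : t.Nonempty) : s ⊂ s ∪ t :=
  left_lt_sup.2 (not_subset_of_disjoint hst ht)

theorem Finset.union_mem_of_laminar {T : Finset (Finset α)}
    (hT : ∀ X ∈ T, ∀ Y ∈ T, (X ∩ Y).Nonempty → X ⊆ Y ∨ Y ⊆ X)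
    {X Y : Finset α} (hX : X ∈ T) (hY : Y ∈ T) (hXY : (X ∩ Y).Nonempty) : X ∪ Y ∈ T := by
  rcases hT X hX Y hY hXY with h | h
  · rwa [union_eq_right.2 h]
  · rwa [union_eq_left.2 h]

namespace IsSplitTree

theorem singleton (a : α) : IsSplitTree {{a}} {a} where
  root_mem := mem_singleton_self _
  subset_root X hX := (mem_singleton.1 hX).subset
  nonempty X hX := mem_singleton.1 hX ▸ singleton_nonempty a
  laminar X hX Y hY _ := by simp_all
  singleton_mem i hi := by simp_all
  split X hX hX2 := by simp_all
  card_add_one := rfl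

theorem join {T₁ T₂ : Finset (Finset α)} {S₁ S₂ : Finset α} (h₁ : IsSplitTree T₁ S₁)
    (h₂ : IsSplitTree T₂ S₂) (hS : Disjoint S₁ S₂) :
    IsSplitTree (insert (S₁ ∪ S₂) (T₁ ∪ T₂)) (S₁ ∪ S₂) := by
  have h₁T : T₁ ⊆ insert (S₁ ∪ S₂) (T₁ ∪ T₂) := subset_union_left.trans (subset_insert _ _)
  have h₂T : T₂ ⊆ insert (S₁ ∪ S₂) (T₁ ∪ T₂) := subset_union_right.trans (subset_insert _ _)
  have hsub : ∀ X ∈ T₁ ∪ T₂, X ⊆ S₁ ∪ S₂ := by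
    simp only [mem_union]
    rintro X (hX | hX)
    exacts [(h₁.subset_root X hX).trans subset_union_left,
      (h₂.subset_root X hX).trans subset_union_right]
  have hcross : ∀ X ∈ T₁, ∀ Y ∈ T₂, Disjoint X Y := fun X hX Y hY =>
    hS.mono (h₁.subset_root X hX) (h₂.subset_root Y hY)
  have hroot : S₁ ∪ S₂ ∉ T₁ ∪ T₂ := by
    simp only [mem_union, not_or]
    exact ⟨fun h => not_subset_of_disjoint hS (h₂.nonempty _ h₂.root_mem)
        (subset_union_right.trans (h₁.subset_root _ h)),
      fun h => not_subset_of_disjoint hS.symm (h₁.nonempty _ h₁.root_mem)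
        (subset_union_left.trans (h₂.subset_root _ h))⟩
  refine ⟨mem_insert_self _ _, ?_, ?_, ?_, ?_, ?_, ?_⟩
  · simp only [mem_insert]
    rintro X (rfl | hX)
    exacts [Subset.rfl, hsub X hX]
  · simp only [mem_insert, mem_union]
    rintro X (rfl | hX | hX)
    exacts [(h₁.nonempty _ h₁.root_mem).mono subset_union_left, h₁.nonempty X hX,
      h₂.nonempty X hX]
  · simp only [mem_insert]
    rintro X (rfl | hX) Y (rfl | hY) hXY
    · exact Or.inl Subset.rfl
    · exact Or.inr (hsub Y hY)
    · exact Or.inl (hsub X hX)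
    simp only [mem_union] at hX hY
    rcases hX with hX | hX <;> rcases hY with hY | hY
    · exact h₁.laminar X hX Y hY hXY
    · exact absurd (hcross X hX Y hY) (not_disjoint_iff_nonempty_inter.2 hXY)
    · exact absurd (hcross Y hY X hX).symm (not_disjoint_iff_nonempty_inter.2 hXY)
    · exact h₂.laminar X hX Y hY hXY
  · simp only [mem_union]
    rintro i (hi | hi)
    exacts [h₁T (h₁.singleton_mem i hi), h₂T (h₂.singleton_mem i hi)]
  · intro X hX hX2
    rcases mem_insert.1 hX with rfl | hX
    · exact ⟨S₁, h₁T h₁.root_mem, S₂, h₂T h₂.root_mem, hS, rfl⟩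
    rcases mem_union.1 hX with hX | hX
    · obtain ⟨X₁, hX₁, X₂, hX₂, hd, hu⟩ := h₁.split X hX hX2
      exact ⟨X₁, h₁T hX₁, X₂, h₁T hX₂, hd, hu⟩
    · obtain ⟨X₁, hX₁, X₂, hX₂, hd, hu⟩ := h₂.split X hX hX2
      exact ⟨X₁, h₂T hX₁, X₂, h₂T hX₂, hd, hu⟩
  · have hT : Disjoint T₁ T₂ := disjoint_left.2 fun X hX₁ hX₂ =>
      (h₁.nonempty X hX₁).ne_empty (disjoint_self.1 (hcross X hX₁ X hX₂))
    rw [card_insert_of_notMem hroot, card_union_of_disjoint hT, card_union_of_disjoint hS]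
    have := h₁.card_add_one
    have := h₂.card_add_one
    omega

end IsSplitTree

theorem exists_isSplitTree_subset {B : Finset (Finset α)} (hne : ∀ S ∈ B, S.Nonempty)
    (hflag : ∀ S ∈ B, 2 ≤ S.card → ∃ S₁ ∈ B, ∃ S₂ ∈ B, Disjoint S₁ S₂ ∧ S₁ ∪ S₂ = S)
    {S : Finset α} (hS : S ∈ B) : ∃ T ⊆ B, IsSplitTree T S := by
  induction S using Finset.strongInduction with
  | _ S ih =>
    by_cases hcard : 2 ≤ S.card
    · obtain ⟨S₁, hS₁, S₂, hS₂, hdisj, rfl⟩ := hflag S hS hcard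
      obtain ⟨T₁, hT₁B, hT₁⟩ :=
        ih S₁ (ssubset_union_left_of_disjoint hdisj (hne S₂ hS₂)) hS₁
      obtain ⟨T₂, hT₂B, hT₂⟩ :=
        ih S₂ (union_comm S₁ S₂ ▸ ssubset_union_left_of_disjoint hdisj.symm (hne S₁ hS₁)) hS₂
      refine ⟨insert (S₁ ∪ S₂) (T₁ ∪ T₂), ?_, hT₁.join hT₂ hdisj⟩
      exact insert_subset hS (union_subset hT₁B hT₂B)
    · have hS1 : S.card = 1 := by have := (hne S hS).card_pos; omega
      obtain ⟨a, rfl⟩ := card_eq_one.1 hS1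
      exact ⟨{{a}}, singleton_subset_iff.2 hS, IsSplitTree.singleton a⟩

/-- If `B` is a connected building set on `[n+1]` whose nestohedron is flag, there is a
connected building subset `B₀ ⊆ B`, containing all singletons, in which every non-singleton
element splits as a disjoint union of two elements of `B₀`, with `|B₀| = 2n + 1`
(so `P_{B₀}` is combinatorially a cube `Iⁿ`). -/
theorem stmt15 {n : ℕ} (B : Finset (Finset (Fin (n + 1))))
    (hB : IsBuildingSet B) (hconn : IsConnectedBS B) (hflag : IsFlagBS B) :
    ∃ B₀ ⊆ B, IsBuildingSet B₀ ∧ IsConnectedBS B₀ ∧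
      (∀ i : Fin (n + 1), ({i} : Finset (Fin (n + 1))) ∈ B₀) ∧
      (∀ S ∈ B₀, 2 ≤ S.card → ∃ S₁ ∈ B₀, ∃ S₂ ∈ B₀, Disjoint S₁ S₂ ∧ S₁ ∪ S₂ = S) ∧
      B₀.card = 2 * n + 1 := by
  obtain ⟨T, hTB, hT⟩ := exists_isSplitTree_subset hB.1 hflag hconn
  have hsing : ∀ i : Fin (n + 1), ({i} : Finset (Fin (n + 1))) ∈ T :=
    fun i => hT.singleton_mem i (mem_univ i)
  refine ⟨T, hTB, ⟨hT.nonempty, hsing, fun X hX Y hY => union_mem_of_laminar hT.laminar hX hY⟩,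
    hT.root_mem, hsing, hT.split, ?_⟩
  have := hT.card_add_one
  rw [card_univ, Fintype.card_fin] at this
  omega
end
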